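/- arXiv:1809.03207 — 3 statements merged into one kernel-verified Lean document; each statement's English description precedes it below -/
import Mathlib

section
/- Under the SCAR assumption (s ⊥ x | y=1, and s=1 implies y=1), the class-conditional probability satisfies Pr(y=1|x) = Pr(s=1|x) / c, where c = Pr(s=1|y=1) is the label frequency, assuming c > 0. -/
open MeasureTheory ProbabilityTheory
open scoped ENNReal

/-- Under SCAR (the labeling probability of positives does not depend on the
features `x`, and labeled implies positive), `Pr(y=1|x) = Pr(s=1|x) / c`
where `c = Pr(s=1|y=1)` is the label frequency. -/
theorem scar_posterior_formula
    {Ω α : Type*} [MeasurableSpace Ω] [MeasurableSpace α]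
    (μ : Measure Ω) [IsProbabilityMeasure μ]
    (X : Ω → α) (hX : Measurable X)
    (S Y : Set Ω) (hS : MeasurableSet S) (hY : MeasurableSet Y)
    (hlab : S ⊆ Y)                      -- s = 1 implies y = 1
    (c : ℝ≥0∞) (hc : c = (μ[|Y]) S) (hcpos : 0 < c)
    (hSCAR : ∀ x : α, μ (Y ∩ X ⁻¹' {x}) ≠ 0 →
      (μ[|Y ∩ X ⁻¹' {x}]) S = c)        -- selected completely at random
    (x : α) (hx : μ (Y ∩ X ⁻¹' {x}) ≠ 0) :
    (μ[|X ⁻¹' {x}]) Y = (μ[|X ⁻¹' {x}]) S / c := by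
  set A := X ⁻¹' {x} with hA
  have key : ∀ (s T : Set Ω), MeasurableSet T →
      (μ[|s]) T = (μ s)⁻¹ * μ (T ∩ s) := by
    intro s T hT
    rw [ProbabilityTheory.cond, Measure.smul_apply, Measure.restrict_apply hT,
      smul_eq_mul]
  have hSCAR' := hSCAR x hx
  rw [key _ _ hS] at hSCAR'
  have hset : S ∩ (Y ∩ A) = S ∩ A := by
    ext ω
    constructor
    · rintro ⟨h1, _, h3⟩; exact ⟨h1, h3⟩
    · rintro ⟨h1, h2⟩; exact ⟨h1, hlab h1, h2⟩
  rw [hset] at hSCAR'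
  have hctop : c ≠ ∞ := by
    rw [← hSCAR']
    exact ENNReal.mul_ne_top (ENNReal.inv_ne_top.mpr hx) (measure_ne_top μ _)
  have hμSA : μ (S ∩ A) = c * μ (Y ∩ A) := by
    calc μ (S ∩ A) = μ (S ∩ A) * ((μ (Y ∩ A))⁻¹ * μ (Y ∩ A)) := by
          rw [ENNReal.inv_mul_cancel hx (measure_ne_top μ _), mul_one]
      _ = ((μ (Y ∩ A))⁻¹ * μ (S ∩ A)) * μ (Y ∩ A) := by ring
      _ = c * μ (Y ∩ A) := by rw [hSCAR']
  rw [key _ _ hY, key _ _ hS, hμSA, ← mul_assoc, mul_comm ((μ A)⁻¹) c,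
    mul_assoc, mul_comm c ((μ A)⁻¹ * μ (Y ∩ A)), mul_div_assoc, ENNReal.div_self hcpos.ne' hctop, mul_one]
end

section
/- The propensity-weighted estimator R̂(ŷ|e,s) = (1/n) Σᵢ [ sᵢ((1/eᵢ)δ₁(ŷᵢ) + (1−1/eᵢ)δ₀(ŷᵢ)) + (1−sᵢ)δ₀(ŷᵢ) ] is an unbiased estimator of the true risk R(ŷ|y) = (1/n) Σᵢ [ yᵢδ₁(ŷᵢ) + (1−yᵢ)δ₀(ŷᵢ) ], when each sᵢ is Bernoulli with Pr(sᵢ=1) = yᵢ·eᵢ and eᵢ > 0 for all i with yᵢ = 1. -/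
open MeasureTheory Finset

/-- The propensity-weighted estimator is an unbiased estimator of the true
risk, when each `s i` is Bernoulli with success probability `y i * e i`. -/
theorem propensity_weighted_estimator_unbiased
    {Ω : Type*} [MeasurableSpace Ω] (μ : Measure Ω) [IsProbabilityMeasure μ]
    (n : ℕ) (hn : 0 < n)
    (y : Fin n → ℝ) (hy : ∀ i, y i = 0 ∨ y i = 1)          -- true labels
    (yhat : Fin n → ℝ) (hyhat : ∀ i, yhat i ∈ Set.Ioo (0:ℝ) 1)  -- predictions
    (e : Fin n → ℝ) (he : ∀ i, y i = 1 → 0 < e i) (he' : ∀ i, e i ≤ 1)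
    (δ₀ δ₁ : ℝ → ℝ)                                        -- cost functions
    (s : Fin n → Ω → ℝ)
    (hs01 : ∀ i, ∀ᵐ ω ∂μ, s i ω = 0 ∨ s i ω = 1)           -- binary labels
    (hsInt : ∀ i, Integrable (s i) μ)
    (hsmean : ∀ i, (∫ ω, s i ω ∂μ) = y i * e i) :          -- Bernoulli(yᵢeᵢ)
    (∫ ω, (1 / (n:ℝ)) * ∑ i, (s i ω * ((1 / e i) * δ₁ (yhat i)
          + (1 - 1 / e i) * δ₀ (yhat i))
        + (1 - s i ω) * δ₀ (yhat i)) ∂μ)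
      = (1 / (n:ℝ)) * ∑ i, (y i * δ₁ (yhat i) + (1 - y i) * δ₀ (yhat i)) := by
  rw [integral_const_mul]
  congr 1
  have hre : ∀ (i : Fin n) (ω : Ω),
      s i ω * ((1 / e i) * δ₁ (yhat i) + (1 - 1 / e i) * δ₀ (yhat i))
        + (1 - s i ω) * δ₀ (yhat i)
      = s i ω * ((1 / e i) * δ₁ (yhat i) + (1 - 1 / e i) * δ₀ (yhat i)
          - δ₀ (yhat i)) + δ₀ (yhat i) := by
    intro i ω; ring
  have hint : ∀ i : Fin n, Integrable (fun ω =>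
      s i ω * ((1 / e i) * δ₁ (yhat i) + (1 - 1 / e i) * δ₀ (yhat i))
        + (1 - s i ω) * δ₀ (yhat i)) μ := by
    intro i
    simp only [hre]
    exact (((hsInt i).mul_const _).add (integrable_const _))
  rw [integral_finset_sum _ (fun i _ => hint i)]
  refine Finset.sum_congr rfl (fun i _ => ?_)
  have : (∫ ω, s i ω * ((1 / e i) * δ₁ (yhat i) + (1 - 1 / e i) * δ₀ (yhat i))
        + (1 - s i ω) * δ₀ (yhat i) ∂μ)
      = (y i * e i) * ((1 / e i) * δ₁ (yhat i) + (1 - 1 / e i) * δ₀ (yhat i)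
          - δ₀ (yhat i)) + δ₀ (yhat i) := by
    simp only [hre]
    rw [integral_add ((hsInt i).mul_const _) (integrable_const _),
      integral_mul_const, hsmean i, integral_const]
    simp
  rw [this]
  rcases hy i with h0 | h1
  · simp [h0]
  · have hei := (he i h1).ne'
    field_simp [h1]
    ring
end

section
/- The variance of the propensity-weighted estimator equals Var[R̂(ŷ|e,s)] = (1/n²) Σᵢ yᵢ eᵢ(1−eᵢ) · ((δ₁(ŷᵢ)−δ₀(ŷᵢ))/eᵢ)², where sᵢ are independent Bernoulli(yᵢeᵢ). -/
open MeasureTheory ProbabilityTheory Finset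
open scoped ENNReal

/-!
Each summand of the estimator is the affine function `((δ₁ ŷᵢ - δ₀ ŷᵢ) / eᵢ) sᵢ + δ₀ ŷᵢ` of the
label `sᵢ`, so by independence the variance of the sum is `Σᵢ ((δ₁ ŷᵢ - δ₀ ŷᵢ) / eᵢ)² Var sᵢ`.
A Bernoulli variable with parameter `p = yᵢ eᵢ` has variance `p (1 - p)`, and `yᵢ² = yᵢ` turns
this into `yᵢ eᵢ (1 - eᵢ)`.
-/

namespace ProbabilityTheory

variable {Ω : Type*} [MeasurableSpace Ω] {μ : Measure Ω}

lemma memLp_of_forall_eq_zero_or_one [IsFiniteMeasure μ] {X : Ω → ℝ} (hX : Measurable X)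
    (h01 : ∀ ω, X ω = 0 ∨ X ω = 1) (p : ℝ≥0∞) : MemLp X p μ :=
  .of_bound hX.aestronglyMeasurable 1 (ae_of_all _ fun ω => by rcases h01 ω with h | h <;> simp [h])

variable [IsProbabilityMeasure μ]

lemma variance_of_forall_eq_zero_or_one {X : Ω → ℝ} (hX : Measurable X)
    (h01 : ∀ ω, X ω = 0 ∨ X ω = 1) :
    Var[X; μ] = μ.real {ω | X ω = 1} * (1 - μ.real {ω | X ω = 1}) := by
  have hsq : X ^ 2 = X := funext fun ω => by rcases h01 ω with h | h <;> simp [h]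
  rw [variance_eq_sub (memLp_of_forall_eq_zero_or_one hX h01 2), hsq,
    integral_of_ae_eq_zero_or_one hX.aemeasurable (ae_of_all _ h01)]
  ring

lemma iIndepFun.variance_sum_const_mul_add {ι : Type*} [Fintype ι] {X : ι → Ω → ℝ}
    (hX : ∀ i, MemLp (X i) 2 μ) (hind : iIndepFun X μ) (a b : ι → ℝ) :
    Var[fun ω => ∑ i, (a i * X i ω + b i); μ] = ∑ i, a i ^ 2 * Var[X i; μ] := by
  have hpair : Set.Pairwise (univ : Finset ι)
      fun i j => IndepFun (fun ω => a i * X i ω + b i) (fun ω => a j * X j ω + b j) μ :=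
    fun i _ j _ hij => (hind.indepFun hij).comp
      ((measurable_id.const_mul (a i)).add_const (b i))
      ((measurable_id.const_mul (a j)).add_const (b j))
  have hsum := IndepFun.variance_sum (X := fun i ω => a i * X i ω + b i)
    (fun i _ => ((hX i).const_mul (a i)).add (memLp_const (b i))) hpair
  rw [Finset.sum_fn] at hsum
  rw [hsum]
  refine Finset.sum_congr rfl fun i _ => ?_
  rw [variance_add_const ((hX i).const_mul (a i)).aestronglyMeasurable, variance_const_mul]

end ProbabilityTheory

theorem propensity_weighted_estimator_variance_general
    {Ω : Type*} [MeasurableSpace Ω] (μ : Measure Ω) [IsProbabilityMeasure μ]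
    (n : ℕ)
    (y : Fin n → ℝ) (hy : ∀ i, y i = 0 ∨ y i = 1)
    (yhat : Fin n → ℝ)
    (e : Fin n → ℝ) (he : ∀ i, e i ∈ Set.Ioc (0:ℝ) 1)
    (δ₀ δ₁ : ℝ → ℝ)
    (s : Fin n → Ω → ℝ) (hsMeas : ∀ i, Measurable (s i))
    (hs01 : ∀ i ω, s i ω = 0 ∨ s i ω = 1)
    (hsBern : ∀ i, μ {ω | s i ω = 1} = ENNReal.ofReal (y i * e i))
    (hsIndep : iIndepFun s μ) :
    variance (fun ω => (1 / (n:ℝ)) * ∑ i, (s i ω * ((1 / e i) * δ₁ (yhat i)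
        + (1 - 1 / e i) * δ₀ (yhat i)) + (1 - s i ω) * δ₀ (yhat i))) μ
    = (1 / (n:ℝ) ^ 2) * ∑ i, y i * e i * (1 - e i)
        * ((δ₁ (yhat i) - δ₀ (yhat i)) / e i) ^ 2 := by
  have hsummand : ∀ i ω, s i ω * ((1 / e i) * δ₁ (yhat i) + (1 - 1 / e i) * δ₀ (yhat i))
      + (1 - s i ω) * δ₀ (yhat i)
      = (δ₁ (yhat i) - δ₀ (yhat i)) / e i * s i ω + δ₀ (yhat i) := fun i ω => by ring
  have hvar : ∀ i, Var[s i; μ] = y i * e i * (1 - e i) := fun i => by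
    have hp : 0 ≤ y i * e i := by rcases hy i with h | h <;> simp [h, (he i).1.le]
    rw [variance_of_forall_eq_zero_or_one (hsMeas i) (hs01 i), measureReal_def, hsBern i,
      ENNReal.toReal_ofReal hp]
    rcases hy i with h | h <;> simp [h]
  simp_rw [hsummand]
  rw [variance_const_mul, hsIndep.variance_sum_const_mul_add
    (fun i => memLp_of_forall_eq_zero_or_one (hsMeas i) (hs01 i) 2), div_pow, one_pow]
  simp_rw [hvar, mul_comm]

/-- The variance of the propensity-weighted estimator with independent labels
`sᵢ ~ Bernoulli(yᵢeᵢ)` equals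
`(1/n²) Σᵢ yᵢ eᵢ (1-eᵢ) ((δ₁(ŷᵢ) - δ₀(ŷᵢ)) / eᵢ)²`. -/
theorem propensity_weighted_estimator_variance
    {Ω : Type*} [MeasurableSpace Ω] (μ : Measure Ω) [IsProbabilityMeasure μ]
    (n : ℕ) (hn : 0 < n)
    (y : Fin n → ℝ) (hy : ∀ i, y i = 0 ∨ y i = 1)
    (yhat : Fin n → ℝ) (hyhat : ∀ i, yhat i ∈ Set.Ioo (0:ℝ) 1)
    (e : Fin n → ℝ) (he : ∀ i, e i ∈ Set.Ioc (0:ℝ) 1)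
    (δ₀ δ₁ : ℝ → ℝ)
    (s : Fin n → Ω → ℝ) (hsMeas : ∀ i, Measurable (s i))
    (hs01 : ∀ i ω, s i ω = 0 ∨ s i ω = 1)
    (hsBern : ∀ i, μ {ω | s i ω = 1} = ENNReal.ofReal (y i * e i))
    (hsIndep : iIndepFun s μ) :
    variance (fun ω => (1 / (n:ℝ)) * ∑ i, (s i ω * ((1 / e i) * δ₁ (yhat i)
        + (1 - 1 / e i) * δ₀ (yhat i)) + (1 - s i ω) * δ₀ (yhat i))) μ
    = (1 / (n:ℝ) ^ 2) * ∑ i, y i * e i * (1 - e i)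
        * ((δ₁ (yhat i) - δ₀ (yhat i)) / e i) ^ 2 :=
  propensity_weighted_estimator_variance_general μ n y hy yhat e he δ₀ δ₁ s hsMeas hs01 hsBern
    hsIndep
end
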